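/- arXiv:1808.09711 — 2 statements merged into one kernel-verified Lean document; each statement's English description precedes it below -/
import Mathlib

section
/- Let (M,d) be a separable metric space, μ a Borel regular Radon measure, E ⊆ M a Borel set, and t > 0. If the upper k-density Θ*_k(μ,x) = limsup_{r→0} μ(B(x,r))/(ω_k r^k) satisfies Θ*_k(μ,x) ≥ t for every x ∈ E, then μ ≥ t · 𝒮^k ⌞ E, where 𝒮^k denotes the k-dimensional spherical Hausdorff measure. -/
open MeasureTheory Metric Filter Topology
open scoped ENNReal Classical

/-- The normalizing constant ω_k = π^{k/2} / Γ(1 + k/2). -/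
noncomputable def hausdorffNormalization (k : ℝ) : ℝ :=
  Real.pi ^ (k / 2) / Real.Gamma (1 + k / 2)

/-- The k-dimensional spherical Hausdorff measure 𝒮^k on a metric space:
defined via the Carathéodory metric construction with the gauge that assigns
(ω_k/2^k)·(diam B)^k to closed balls B and +∞ to any other set (so that only
coverings by balls are effective). -/

noncomputable def sphericalHausdorff (M : Type*) [MetricSpace M] [MeasurableSpace M]
    [BorelSpace M] (k : ℝ) : Measure M :=
  Measure.mkMetric' (fun s =>
    if ∃ (x : M) (r : ℝ), s = closedBall x r then
      ENNReal.ofReal (hausdorffNormalization k / 2 ^ k) * EMetric.diam s ^ k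
    else ⊤)

/-- The upper k-density Θ*_k(μ,x) = limsup_{r→0⁺} μ(B(x,r))/(ω_k r^k). -/
noncomputable def upperDensity {M : Type*} [MetricSpace M] [MeasurableSpace M]
    (k : ℝ) (μ : Measure M) (x : M) : ℝ≥0∞ :=
  Filter.limsup
    (fun r : ℝ => μ (closedBall x r) / ENNReal.ofReal (hausdorffNormalization k * r ^ k))
    (𝓝[>] 0)

/-!
Fix `c < t` and `δ > 0`, and an open set `U` of finite measure. Each point of `E ∩ U` is the
centre of arbitrarily small closed balls `B(x, r) ⊆ U` with `c ω_k r^k ≤ μ B(x, r)`. A Vitali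
selection yields a countable disjoint family of such balls such that, for every finite `F`,
`E ∩ U` is covered by the balls of `F` together with the threefold enlargements of the others.
The selected balls are disjoint subsets of `U`, so their measures are summable and the enlarged
balls only cost a tail of that sum: `c 𝒮^k_δ(E ∩ U) ≤ μ U`. Outer regularity of `μ` concludes.

For `k < 0` the statement degenerates: either `ω_k ≤ 0` (the Gamma factor can be negative) and
`𝒮^k = 0`, or the density of the locally finite measure `μ` vanishes everywhere.
-/

open TopologicalSpace

theorem ENNReal.mul_le_of_forall_lt_mul_le {c x y : ℝ≥0∞} (h : ∀ c' < c, c' * x ≤ y) :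
    c * x ≤ y := by
  rw [← ENNReal.iSup_lt_eq_self c, ENNReal.iSup_mul]
  refine iSup_le fun c' => ?_
  rw [ENNReal.iSup_mul]
  exact iSup_le (h c')

theorem ENNReal.exists_pos_ofReal_mul_le {ε : ℝ≥0∞} (hε : 0 < ε) {c : ℝ} (hc : 0 < c) :
    ∃ ρ > 0, ENNReal.ofReal (c * ρ) ≤ ε := by
  obtain ⟨r, -, hr0, hrε⟩ := ENNReal.lt_iff_exists_real_btwn.1 hε
  refine ⟨r / c, div_pos (ENNReal.ofReal_pos.1 hr0) hc, ?_⟩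
  rw [mul_div_cancel₀ r hc.ne']
  exact hrε.le

theorem ENNReal.exists_finset_tsum_diff_lt {α : Type*} {ε : ℝ≥0∞} {s : Set α} {f : α → ℝ≥0∞}
    (hf : ∑' x : s, f x ≠ ∞) (hε : 0 < ε) : ∃ F : Finset α, ∑' x : ↥(s \ F), f x < ε := by
  rw [tsum_subtype] at hf
  obtain ⟨F, hF⟩ :=
    ((ENNReal.tendsto_tsum_compl_atTop_zero hf).eventually (gt_mem_nhds hε)).exists
  refine ⟨F, ?_⟩
  rwa [tsum_subtype, Set.sdiff_eq_compl_inter, ← Set.indicator_indicator, ← tsum_subtype]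

theorem MeasureTheory.OuterMeasure.mkMetric'.pre_biUnion_le {X ι : Type*} [EMetricSpace X]
    (m : Set X → ℝ≥0∞) {δ : ℝ≥0∞} {s : Set ι} (hs : s.Countable) {f : ι → Set X}
    (hf : ∀ i ∈ s, ediam (f i) ≤ δ) :
    OuterMeasure.mkMetric'.pre m δ (⋃ i ∈ s, f i) ≤ ∑' i : s, m (f i) :=
  (measure_biUnion_le _ hs f).trans
    (ENNReal.tsum_le_tsum fun i => OuterMeasure.mkMetric'.pre_le (hf i i.2))

theorem MeasureTheory.isLocallyFiniteMeasure_of_outerRegular {X : Type*} [TopologicalSpace X]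
    [MeasurableSpace X] (μ : Measure X) [μ.OuterRegular] [IsFiniteMeasureOnCompacts μ] :
    IsLocallyFiniteMeasure μ := by
  refine ⟨fun x => ?_⟩
  obtain ⟨U, hxU, hU, hμU⟩ := Set.exists_isOpen_lt_of_lt {x} (μ {x} + 1)
    (ENNReal.lt_add_right isCompact_singleton.measure_lt_top.ne one_ne_zero)
  exact ⟨U, hU.mem_nhds (hxU rfl), hμU.trans_le le_top⟩

-- The gauge inside `sphericalHausdorff`, so that `sphericalHausdorff M k` is
-- `Measure.mkMetric' (sphericalGauge M k)` by definition.
noncomputable def sphericalGauge (M : Type*) [MetricSpace M] (k : ℝ) : Set M → ℝ≥0∞ :=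
  fun s =>
    if ∃ (x : M) (r : ℝ), s = closedBall x r then
      ENNReal.ofReal (hausdorffNormalization k / 2 ^ k) * ediam s ^ k
    else ⊤

section

variable {M : Type*} [MetricSpace M]

theorem ediam_closedBall_le (x : M) {r : ℝ} (hr : 0 ≤ r) :
    ediam (closedBall x r) ≤ ENNReal.ofReal (2 * r) := by
  rw [← closedEBall_ofReal hr, ENNReal.ofReal_mul zero_le_two, ENNReal.ofReal_ofNat]
  exact ediam_closedEBall_le

theorem exists_countable_disjoint_closedBall_subfamily [SeparableSpace M]
    {A : Set M} {T : Set (M × ℝ)} {R : ℝ} (hT : ∀ p ∈ T, 0 < p.2 ∧ p.2 ≤ R)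
    (hA : ∀ x ∈ A, ∀ ε > 0, ∃ r ≤ ε, (x, r) ∈ T) :
    ∃ u ⊆ T, u.Countable ∧ u.PairwiseDisjoint (fun p => closedBall p.1 p.2) ∧
      ∀ F : Finset (M × ℝ),
        A ⊆ (⋃ p ∈ u ∩ F, closedBall p.1 p.2) ∪ ⋃ p ∈ u \ F, closedBall p.1 (3 * p.2) := by
  obtain ⟨u, huT, hdisj, hcov⟩ := Vitali.exists_disjoint_subfamily_covering_enlargement
    (fun p => closedBall p.1 p.2) T (·.2) 2 one_lt_two (fun p hp => (hT p hp).1.le) R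
    (fun p hp => (hT p hp).2) (fun p hp => nonempty_closedBall.2 (hT p hp).1.le)
  have hu : u.Countable := (hdisj.mono_on fun p _ => ball_subset_closedBall).countable_of_isOpen
    (fun _ _ => isOpen_ball) fun p hp => nonempty_ball.2 (hT p (huT hp)).1
  refine ⟨u, huT, hu, hdisj, fun F x hx => ?_⟩
  by_cases hxK : x ∈ ⋃ p ∈ u ∩ F, closedBall p.1 p.2
  · exact Or.inl hxK
  refine Or.inr ?_
  -- A ball of `T` at `x` missing this closed union meets a selected ball, which is thus not in `F`.
  have hK : IsClosed (⋃ p ∈ u ∩ F, closedBall p.1 p.2) :=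
    (F.finite_toSet.inter_of_right u).isClosed_biUnion fun _ _ => isClosed_closedBall
  obtain ⟨ε, hε, hεK⟩ := Metric.isOpen_iff.1 hK.isOpen_compl x hxK
  obtain ⟨r, hrε, hxr⟩ := hA x hx (ε / 2) (half_pos hε)
  obtain ⟨q, hqu, ⟨z, hzx, hzq⟩, hrq⟩ := hcov (x, r) hxr
  have hzx : dist z x ≤ r := hzx
  have hzq : dist z q.1 ≤ q.2 := hzq
  have hqF : q ∉ F := fun hqF =>
    hεK (mem_ball.2 (by linarith)) (Set.mem_biUnion ⟨hqu, hqF⟩ (mem_closedBall.2 hzq))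
  refine Set.mem_biUnion ⟨hqu, hqF⟩ (mem_closedBall.2 ?_)
  calc dist x q.1 ≤ dist z x + dist z q.1 := dist_triangle_left x q.1 z
    _ ≤ 3 * q.2 := by simp only at hrq; linarith

theorem mkMetric'_pre_le_of_subset_union_closedBall (m : Set M → ℝ≥0∞) {δ : ℝ≥0∞} {R : ℝ}
    (hR : ENNReal.ofReal (6 * R) ≤ δ) {u : Set (M × ℝ)} (hu : u.Countable)
    (huR : ∀ p ∈ u, 0 < p.2 ∧ p.2 ≤ R) {A : Set M} {F : Set (M × ℝ)}
    (hA : A ⊆ (⋃ p ∈ u ∩ F, closedBall p.1 p.2) ∪ ⋃ p ∈ u \ F, closedBall p.1 (3 * p.2)) :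
    OuterMeasure.mkMetric'.pre m δ A ≤ ∑' p : ↥(u ∩ F), m (closedBall p.1.1 p.1.2) +
      ∑' p : ↥(u \ F), m (closedBall p.1.1 (3 * p.1.2)) := by
  have hdiam : ∀ p ∈ u, ∀ s ∈ Set.Icc (0 : ℝ) 3, ediam (closedBall p.1 (s * p.2)) ≤ δ := by
    intro p hp s hs
    obtain ⟨hp0, hpR⟩ := huR p hp
    refine (ediam_closedBall_le _ (mul_nonneg hs.1 hp0.le)).trans (le_trans ?_ hR)
    exact ENNReal.ofReal_le_ofReal (by nlinarith [hs.2])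
  refine (measure_mono hA).trans <| (measure_union_le _ _).trans <| add_le_add ?_ ?_
  · exact OuterMeasure.mkMetric'.pre_biUnion_le _ (hu.mono Set.inter_subset_left)
      fun p hp => by simpa using hdiam p hp.1 1 (by norm_num)
  · exact OuterMeasure.mkMetric'.pre_biUnion_le _ (hu.mono Set.sdiff_subset)
      fun p hp => hdiam p hp.1 3 (by norm_num)

theorem sphericalGauge_closedBall_le {k : ℝ} (hk : 0 ≤ k) (x : M) {r : ℝ} (hr : 0 ≤ r) :
    sphericalGauge M k (closedBall x r) ≤ ENNReal.ofReal (hausdorffNormalization k * r ^ k) := by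
  rw [sphericalGauge, if_pos ⟨x, r, rfl⟩]
  calc ENNReal.ofReal (hausdorffNormalization k / 2 ^ k) * ediam (closedBall x r) ^ k
      ≤ ENNReal.ofReal (hausdorffNormalization k / 2 ^ k) * ENNReal.ofReal (2 * r) ^ k := by
        gcongr
        exact ediam_closedBall_le x hr
    _ = ENNReal.ofReal (hausdorffNormalization k * r ^ k) := by
        rw [ENNReal.ofReal_rpow_of_nonneg (by positivity) hk,
          ← ENNReal.ofReal_mul' (by positivity), Real.mul_rpow zero_le_two hr]
        field_simp

theorem sphericalGauge_closedBall_mul_le {k : ℝ} (hk : 0 ≤ k) (x : M) {s r : ℝ} (hs : 0 ≤ s)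
    (hr : 0 ≤ r) : sphericalGauge M k (closedBall x (s * r)) ≤
      ENNReal.ofReal (s ^ k) * ENNReal.ofReal (hausdorffNormalization k * r ^ k) := by
  refine (sphericalGauge_closedBall_le hk x (mul_nonneg hs hr)).trans_eq ?_
  rw [← ENNReal.ofReal_mul (by positivity), Real.mul_rpow hs hr]
  ring_nf

theorem mul_sphericalGauge_closedBall_mul_le {k : ℝ} (hk : 0 ≤ k) {a c : ℝ≥0∞} {x : M}
    {s r : ℝ} (hs : 0 ≤ s) (hr : 0 ≤ r)
    (ha : c * ENNReal.ofReal (hausdorffNormalization k * r ^ k) ≤ a) :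
    c * sphericalGauge M k (closedBall x (s * r)) ≤ ENNReal.ofReal (s ^ k) * a :=
  calc c * sphericalGauge M k (closedBall x (s * r))
      ≤ c * (ENNReal.ofReal (s ^ k) * ENNReal.ofReal (hausdorffNormalization k * r ^ k)) := by
        gcongr
        exact sphericalGauge_closedBall_mul_le hk x hs hr
    _ = ENNReal.ofReal (s ^ k) * (c * ENNReal.ofReal (hausdorffNormalization k * r ^ k)) :=
        mul_left_comm _ _ _
    _ ≤ ENNReal.ofReal (s ^ k) * a := by gcongr

theorem sphericalGauge_closedBall_eq_zero {k : ℝ} (hω : hausdorffNormalization k ≤ 0) (x : M)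
    (r : ℝ) : sphericalGauge M k (closedBall x r) = 0 := by
  rw [sphericalGauge, if_pos ⟨x, r, rfl⟩, ENNReal.ofReal_of_nonpos, zero_mul]
  exact div_nonpos_of_nonpos_of_nonneg hω (by positivity)

variable [MeasurableSpace M]

theorem sphericalHausdorff_apply [BorelSpace M] (k : ℝ) {A : Set M} (hA : MeasurableSet A) :
    sphericalHausdorff M k A =
      ⨆ δ > 0, OuterMeasure.mkMetric'.pre (sphericalGauge M k) δ A := by
  rw [sphericalHausdorff, Measure.mkMetric', toMeasure_apply _ _ hA, OuterMeasure.mkMetric']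
  simp only [OuterMeasure.iSup_apply]
  rfl

theorem sphericalHausdorff_eq_zero_of_nonpos [BorelSpace M] [SeparableSpace M]
    {k : ℝ} (hω : hausdorffNormalization k ≤ 0) : sphericalHausdorff M k = 0 := by
  rw [← Measure.measure_univ_eq_zero, sphericalHausdorff_apply k MeasurableSet.univ]
  refine ENNReal.iSup_eq_zero.2 fun δ => ENNReal.iSup_eq_zero.2 fun hδ => le_zero_iff.1 ?_
  obtain ⟨D, hD, hDdense⟩ := exists_countable_dense M
  obtain ⟨ρ, hρ, hρδ⟩ := ENNReal.exists_pos_ofReal_mul_le hδ two_pos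
  have hcover : Set.univ ⊆ ⋃ y ∈ D, closedBall y ρ :=
    ((dense_iff_iUnion_ball D).1 hDdense ρ hρ).ge.trans
      (Set.iUnion₂_mono fun _ _ => ball_subset_closedBall)
  calc OuterMeasure.mkMetric'.pre (sphericalGauge M k) δ Set.univ
      ≤ ∑' y : D, sphericalGauge M k (closedBall y ρ) :=
        (measure_mono hcover).trans <| OuterMeasure.mkMetric'.pre_biUnion_le _ hD
          fun y _ => (ediam_closedBall_le y hρ.le).trans hρδ
    _ = 0 := by simp [sphericalGauge_closedBall_eq_zero hω]

theorem upperDensity_eq_zero_of_neg (μ : Measure M) [IsLocallyFiniteMeasure μ] {k : ℝ}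
    (hk : k < 0) (hω : 0 < hausdorffNormalization k) (x : M) : upperDensity k μ x = 0 := by
  obtain ⟨r₀, hr₀, hfin⟩ := (μ.finiteAt_nhds x).exists_mem_basis nhds_basis_closedBall
  have hden : Tendsto (fun r => ENNReal.ofReal (hausdorffNormalization k * r ^ k)) (𝓝[>] 0)
      (𝓝 ∞) :=
    ENNReal.tendsto_ofReal_atTop.comp ((tendsto_rpow_neg_nhdsGT_zero hk).const_mul_atTop hω)
  have hbound : Tendsto (fun r => μ (closedBall x r₀) /
      ENNReal.ofReal (hausdorffNormalization k * r ^ k)) (𝓝[>] 0) (𝓝 0) := by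
    simpa using ENNReal.Tendsto.const_div hden (Or.inr hfin.ne)
  refine (tendsto_of_tendsto_of_tendsto_of_le_of_le' tendsto_const_nhds hbound
    (Eventually.of_forall fun _ => zero_le) ?_).limsup_eq
  filter_upwards [Ioo_mem_nhdsGT hr₀] with r hr
  gcongr
  exact hr.2.le

theorem frequently_mul_le_measure_closedBall (μ : Measure M) {k : ℝ} {c : ℝ≥0∞} {x : M}
    (hc : c < upperDensity k μ x) :
    ∃ᶠ r in 𝓝[>] 0,
      c * ENNReal.ofReal (hausdorffNormalization k * r ^ k) ≤ μ (closedBall x r) :=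
  (frequently_lt_of_lt_limsup (by isBoundedDefault) hc).mono fun _ hr =>
    ENNReal.mul_le_of_le_div hr.le

theorem mul_mkMetric'_pre_sphericalGauge_le [OpensMeasurableSpace M] [SeparableSpace M]
    (μ : Measure M) {k : ℝ} (hk : 0 ≤ k) {c δ : ℝ≥0∞} {R : ℝ}
    (hR : ENNReal.ofReal (6 * R) ≤ δ) {A U : Set M}
    (hA : ∀ x ∈ A, ∀ ε > 0, ∃ r ≤ ε, 0 < r ∧ r ≤ R ∧ closedBall x r ⊆ U ∧
      c * ENNReal.ofReal (hausdorffNormalization k * r ^ k) ≤ μ (closedBall x r)) :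
    c * OuterMeasure.mkMetric'.pre (sphericalGauge M k) δ A ≤ μ U := by
  set T : Set (M × ℝ) := {p | 0 < p.2 ∧ p.2 ≤ R ∧ closedBall p.1 p.2 ⊆ U ∧
    c * ENNReal.ofReal (hausdorffNormalization k * p.2 ^ k) ≤ μ (closedBall p.1 p.2)}
  obtain ⟨u, huT, hu, hdisj, hcover⟩ :=
    exists_countable_disjoint_closedBall_subfamily (T := T) (fun p hp => ⟨hp.1, hp.2.1⟩) hA
  set f : M × ℝ → ℝ≥0∞ := fun p => μ (closedBall p.1 p.2)
  have hfU : ∑' p : u, f p ≤ μ U := by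
    rw [← measure_biUnion hu hdisj fun p _ => measurableSet_closedBall]
    exact measure_mono (Set.iUnion₂_subset fun p hp => (huT hp).2.2.1)
  have hball : ∀ p ∈ T, ∀ s : ℝ, 0 ≤ s →
      c * sphericalGauge M k (closedBall p.1 (s * p.2)) ≤ ENNReal.ofReal (s ^ k) * f p :=
    fun p hp s hs => mul_sphericalGauge_closedBall_mul_le hk hs hp.1.le hp.2.2.2
  refine ENNReal.le_of_forall_pos_le_add fun ε hε hμU => ?_
  obtain ⟨F, hF⟩ := ENNReal.exists_finset_tsum_diff_lt (hfU.trans_lt hμU).ne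
    (ENNReal.div_pos (by exact_mod_cast hε.ne') ENNReal.ofReal_ne_top :
      0 < (ε : ℝ≥0∞) / ENNReal.ofReal (3 ^ k))
  calc c * OuterMeasure.mkMetric'.pre (sphericalGauge M k) δ A
      ≤ c * (∑' p : ↥(u ∩ F), sphericalGauge M k (closedBall p.1.1 p.1.2) +
          ∑' p : ↥(u \ F), sphericalGauge M k (closedBall p.1.1 (3 * p.1.2))) := by
        gcongr
        exact mkMetric'_pre_le_of_subset_union_closedBall _ hR hu
          (fun p hp => ⟨(huT hp).1, (huT hp).2.1⟩) (hcover F)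
    _ ≤ ∑' p : ↥(u ∩ F), f p + ENNReal.ofReal (3 ^ k) * ∑' p : ↥(u \ F), f p := by
        rw [mul_add, ← ENNReal.tsum_mul_left, ← ENNReal.tsum_mul_left, ← ENNReal.tsum_mul_left]
        exact add_le_add
          (ENNReal.tsum_le_tsum fun p => by simpa using hball _ (huT p.2.1) 1 zero_le_one)
          (ENNReal.tsum_le_tsum fun p => hball _ (huT p.2.1) 3 (by norm_num))
    _ ≤ μ U + ε := by
        gcongr
        · exact (ENNReal.tsum_mono_subtype f Set.inter_subset_left).trans hfU
        · calc ENNReal.ofReal (3 ^ k) * ∑' p : ↥(u \ F), f p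
              ≤ ENNReal.ofReal (3 ^ k) * (ε / ENNReal.ofReal (3 ^ k)) := by gcongr
            _ ≤ ε := ENNReal.mul_div_le

theorem mul_sphericalHausdorff_inter_le_of_isOpen [BorelSpace M] [SeparableSpace M]
    (μ : Measure M) {k : ℝ} (hk : 0 ≤ k) {c : ℝ≥0∞} {E U : Set M} (hE : MeasurableSet E)
    (hdens : ∀ x ∈ E, c ≤ upperDensity k μ x) (hU : IsOpen U) :
    c * sphericalHausdorff M k (U ∩ E) ≤ μ U := by
  refine ENNReal.mul_le_of_forall_lt_mul_le fun c' hc' => ?_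
  rw [sphericalHausdorff_apply k (hU.measurableSet.inter hE), ENNReal.mul_iSup]
  refine iSup_le fun δ => ?_
  rw [ENNReal.mul_iSup]
  refine iSup_le fun hδ => ?_
  obtain ⟨R, hR, hRδ⟩ := ENNReal.exists_pos_ofReal_mul_le hδ (by norm_num : (0 : ℝ) < 6)
  refine mul_mkMetric'_pre_sphericalGauge_le μ hk hRδ fun x hx ε hε => ?_
  have hsmall : ∀ᶠ r in 𝓝[>] (0 : ℝ), r ∈ Set.Ioc 0 (min ε R) ∧ closedBall x r ⊆ U :=
    Eventually.and (Ioc_mem_nhdsGT (lt_min hε hR))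
      (nhdsWithin_le_nhds (eventually_closedBall_subset (hU.mem_nhds hx.1)))
  obtain ⟨r, hrμ, ⟨hr0, hrεR⟩, hrU⟩ :=
    ((frequently_mul_le_measure_closedBall μ (hc'.trans_le (hdens x hx.2))).and_eventually
      hsmall).exists
  exact ⟨r, hrεR.trans (min_le_left _ _), hr0, hrεR.trans (min_le_right _ _), hrU, hrμ⟩

theorem smul_restrict_sphericalHausdorff_le [BorelSpace M] [SeparableSpace M]
    (μ : Measure M) [μ.OuterRegular] {k : ℝ} (hk : 0 ≤ k) {c : ℝ≥0∞} {E : Set M}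
    (hE : MeasurableSet E) (hdens : ∀ x ∈ E, c ≤ upperDensity k μ x) :
    c • (sphericalHausdorff M k).restrict E ≤ μ := by
  refine Measure.le_iff.2 fun s hs => ?_
  rw [Measure.smul_apply, smul_eq_mul, Measure.restrict_apply hs, Set.measure_eq_iInf_isOpen s μ]
  refine le_iInf₂ fun U hsU => le_iInf fun hU => ?_
  calc c * sphericalHausdorff M k (s ∩ E) ≤ c * sphericalHausdorff M k (U ∩ E) := by
        gcongr
    _ ≤ μ U := mul_sphericalHausdorff_inter_le_of_isOpen μ hk hE hdens hU

end

theorem stmt_2_general {M : Type*} [MetricSpace M] [TopologicalSpace.SeparableSpace M]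
    [MeasurableSpace M] [BorelSpace M]
    (μ : Measure M) [μ.Regular]
    (k t : ℝ) (E : Set M) (hE : MeasurableSet E)
    (hdens : ∀ x ∈ E, ENNReal.ofReal t ≤ upperDensity k μ x) :
    ENNReal.ofReal t • (sphericalHausdorff M k).restrict E ≤ μ := by
  rcases le_or_gt 0 k with hk | hk
  · exact smul_restrict_sphericalHausdorff_le μ hk hE hdens
  rcases le_or_gt (hausdorffNormalization k) 0 with hω | hω
  · simp [sphericalHausdorff_eq_zero_of_nonpos hω, Measure.zero_le]
  have := isLocallyFiniteMeasure_of_outerRegular μ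
  rcases E.eq_empty_or_nonempty with rfl | ⟨x, hx⟩
  · simp [Measure.zero_le]
  have ht : ENNReal.ofReal t = 0 :=
    le_zero_iff.1 ((hdens x hx).trans_eq (upperDensity_eq_zero_of_neg μ hk hω x))
  simp [ht, Measure.zero_le]

/-- **Upper density lower bound implies measure lower bound.**
If μ is a Borel regular Radon measure on a separable metric space, E is Borel, t > 0,
and Θ*_k(μ,x) ≥ t for every x ∈ E, then μ ≥ t · 𝒮^k ⌞ E. -/
theorem stmt_2 {M : Type*} [MetricSpace M] [TopologicalSpace.SeparableSpace M]
    [MeasurableSpace M] [BorelSpace M]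
    (μ : Measure M) [μ.Regular]
    (k t : ℝ) (ht : 0 < t) (E : Set M) (hE : MeasurableSet E)
    (hdens : ∀ x ∈ E, ENNReal.ofReal t ≤ upperDensity k μ x) :
    ENNReal.ofReal t • (sphericalHausdorff M k).restrict E ≤ μ :=
  stmt_2_general μ k t E hE hdens
end

section
/- Let (ℝⁿ,X) be an equiregular CC space of homogeneous dimension Q, with local Ahlfors Q-regularity and the relative isoperimetric inequality min{ℒⁿ(E∩B(p,r)), ℒⁿ(B(p,r)\E)}^{(Q−1)/Q} ≤ C·P_X(E, B(p,r)). Let Ω ⊆ ℝⁿ be open, and let (E_h) be a sequence of measurable sets in Ω with ℒⁿ(E_h) → 0 and P_X(E_h; Ω) → 0. Then for every α ∈ (0,1): ℋ^{Q−1}( ⋂_{h∈ℕ} { p ∈ Ω : limsup_{r→0} ℒⁿ(E_h ∩ B(p,r)) / ℒⁿ(B(p,r)) ≥ α } ) = 0, where ℋ^{Q−1} is the (Q−1)-dimensional Hausdorff measure for the CC metric. -/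
/-!
Fix `h` with `μ(E_h)` and `P(E_h; Ω)` small. At a point `p` of upper density `≥ α`, the density
of `E_h` in the dyadic balls `B(p, r₀ 2⁻ᵏ)` starts below a threshold `β` (because `μ(E_h)` is
tiny) and later exceeds `α / 2 ≥ β`. At the first scale `ρ` where it reaches `β`, the doubling
property keeps it below `α / 2`, so both `E_h` and its complement fill a fixed fraction of
`B(p, ρ)`, and the isoperimetric inequality together with Ahlfors regularity gives
`ρ^(Q-1) ≲ P(E_h; B(p, ρ))`. A disjoint Vitali subfamily of these balls whose 4-fold enlargements
cover the set bounds its `(Q-1)`-Hausdorff content at scale `8 r₀` by `≲ P(E_h; Ω)`, which is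
arbitrarily small. The local constants become uniform on countably many pieces of the set.
-/

open MeasureTheory Metric Filter Topology Set
open scoped ENNReal MeasureTheory

lemma mul_le_min_measure_inter_sdiff {α : Type*} [MeasurableSpace α] {μ : Measure α}
    {s t : Set α} {a β : ℝ≥0∞}
    (hβ : β * μ s ≤ μ (t ∩ s)) (ha : μ (t ∩ s) ≤ a * μ s) (hβa : β + a ≤ 1) (hs : μ s ≠ ∞) :
    β * μ s ≤ min (μ (t ∩ s)) (μ (s \ t)) := by
  have ha_top : a ≠ ∞ := ne_top_of_le_ne_top ENNReal.one_ne_top (le_add_self.trans hβa)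
  have hsum : a * μ s + β * μ s ≤ μ s := by
    rw [← add_mul, add_comm]; exact (mul_le_mul_left hβa _).trans (one_mul _).le
  refine le_min hβ ?_
  calc β * μ s ≤ μ s - a * μ s := ENNReal.le_sub_of_add_le_left (ENNReal.mul_ne_top ha_top hs) hsum
    _ ≤ μ s - μ (t ∩ s) := tsub_le_tsub_left ha _
    _ ≤ μ (s \ (t ∩ s)) := le_measure_sdiff
    _ = μ (s \ t) := by rw [sdiff_inter_self_eq_sdiff]

lemma eventually_nat_of_exists_pos {P : ℝ → ℝ → Prop}
    (hP : ∀ {C C' R R' : ℝ}, P C R → 0 < C → C ≤ C' → R' ≤ R → P C' R')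
    (h : ∃ C > 0, ∃ R > 0, P C R) : ∀ᶠ k : ℕ in atTop, P (k + 1) (1 / (k + 1)) := by
  obtain ⟨C, hC, R, hR, hCR⟩ := h
  have hC' : ∀ᶠ k : ℕ in atTop, C ≤ k + 1 :=
    (tendsto_atTop_add_const_right _ 1 tendsto_natCast_atTop_atTop).eventually_ge_atTop C
  have hR' : ∀ᶠ k : ℕ in atTop, 1 / ((k : ℝ) + 1) ≤ R :=
    tendsto_one_div_add_atTop_nhds_zero_nat.eventually (eventually_le_nhds hR)
  filter_upwards [hC', hR'] with k hk hk' using hP hCR hC hk hk'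

lemma hausdorffMeasure_eq_zero_of_forall_cover {X : Type*} [EMetricSpace X] [MeasurableSpace X]
    [BorelSpace X] {d : ℝ} {S : Set X}
    (h : ∀ ε : ℝ, 0 < ε → ∃ (c : Set X) (t : X → Set X), c.Countable ∧ S ⊆ ⋃ x ∈ c, t x ∧
      (∀ x ∈ c, ediam (t x) ≤ ENNReal.ofReal ε) ∧ ∑' x : c, ediam (t x) ^ d ≤ ENNReal.ofReal ε) :
    μH[d] S = 0 := by
  choose c t hc hcov hdiam hsum using fun n : ℕ => h (1 / (n + 1)) Nat.one_div_pos_of_nat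
  have (n : ℕ) : Countable (c n) := (hc n).to_subtype
  have hε : Tendsto (fun n : ℕ => ENNReal.ofReal (1 / (n + 1))) atTop (𝓝 0) := by
    simpa using ENNReal.tendsto_ofReal tendsto_one_div_add_atTop_nhds_zero_nat
  refine le_antisymm ?_ zero_le
  calc μH[d] S ≤ liminf (fun n => ∑' x : c n, ediam (t n x) ^ d) atTop :=
        Measure.hausdorffMeasure_le_liminf_tsum d S _ hε (fun n (x : c n) => t n x)
          (.of_forall fun n x => hdiam n x x.2)
          (.of_forall fun n => (hcov n).trans_eq (biUnion_eq_iUnion _ _))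
    _ ≤ liminf (fun n : ℕ => ENNReal.ofReal (1 / (n + 1))) atTop :=
        liminf_le_liminf (.of_forall hsum)
    _ = 0 := hε.liminf_eq

lemma exists_countable_cover_tsum_ediam_rpow_le {M : Type*} [PseudoMetricSpace M]
    [TopologicalSpace.SeparableSpace M] [MeasurableSpace M] [OpensMeasurableSpace M]
    (ν : Measure M) {S : Set M} {ρ : M → ℝ} {r₀ d : ℝ} {K : ℝ≥0∞} (hd : 0 ≤ d)
    (hρ : ∀ p ∈ S, ρ p ∈ Ioc 0 r₀)
    (hK : ∀ p ∈ S, ENNReal.ofReal (ρ p ^ d) ≤ K * ν (ball p (ρ p))) :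
    ∃ c ⊆ S, c.Countable ∧ S ⊆ ⋃ x ∈ c, closedBall x (4 * ρ x) ∧
      (∀ x ∈ c, ediam (closedBall x (4 * ρ x)) ≤ ENNReal.ofReal (8 * r₀)) ∧
      ∑' x : c, ediam (closedBall (x : M) (4 * ρ x)) ^ d ≤
        ENNReal.ofReal (8 ^ d) * K * ν (⋃ x ∈ c, ball x (ρ x)) := by
  obtain ⟨c, hcS, hdisj, hcov⟩ := Vitali.exists_disjoint_subfamily_covering_enlargement_closedBall
    S id ρ r₀ (fun p hp => (hρ p hp).2) 4 (by norm_num)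
  have hdisj' : c.PairwiseDisjoint fun x => ball x (ρ x) :=
    hdisj.mono fun x => ball_subset_closedBall
  have hc : c.Countable := hdisj'.countable_of_isOpen (fun _ _ => isOpen_ball)
    fun x hx => nonempty_ball.2 (hρ x (hcS hx)).1
  have hdiam (x : M) : ediam (closedBall x (4 * ρ x)) ≤ ENNReal.ofReal (8 * ρ x) :=
    ediam_le_of_forall_dist_le fun y hy z hz => by
      linarith [dist_triangle_right y z x, mem_closedBall.1 hy, mem_closedBall.1 hz]
  refine ⟨c, hcS, hc, fun p hp => ?_, fun x hx => ?_, ?_⟩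
  · obtain ⟨x, hx, hsub⟩ := hcov p hp
    exact mem_biUnion hx (hsub (mem_closedBall_self (hρ p hp).1.le))
  · exact (hdiam x).trans (ENNReal.ofReal_le_ofReal (by linarith [(hρ x (hcS hx)).2]))
  calc ∑' x : c, ediam (closedBall (x : M) (4 * ρ x)) ^ d
      ≤ ∑' x : c, ENNReal.ofReal (8 ^ d) * (K * ν (ball (x : M) (ρ x))) := by
        refine ENNReal.tsum_le_tsum fun x => ?_
        have hρx := (hρ x (hcS x.2)).1
        calc ediam (closedBall (x : M) (4 * ρ x)) ^ d ≤ ENNReal.ofReal (8 * ρ x) ^ d := by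
              gcongr; exact hdiam x
          _ = ENNReal.ofReal (8 ^ d) * ENNReal.ofReal (ρ x ^ d) := by
              rw [ENNReal.ofReal_rpow_of_nonneg (by positivity) hd, Real.mul_rpow (by norm_num)
                hρx.le, ENNReal.ofReal_mul (by positivity)]
          _ ≤ _ := by gcongr; exact hK x (hcS x.2)
    _ = ENNReal.ofReal (8 ^ d) * K * ν (⋃ x ∈ c, ball x (ρ x)) := by
        rw [measure_biUnion hc hdisj' fun _ _ => measurableSet_ball, ENNReal.tsum_mul_left,
          ENNReal.tsum_mul_left, mul_assoc]

section Balls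

variable {M : Type*} [PseudoMetricSpace M] [MeasurableSpace M]

def AhlforsRegularAt (μ : Measure M) (Q C R : ℝ) (p : M) : Prop :=
  ∀ r ∈ Ioo (0 : ℝ) R,
    ENNReal.ofReal (r ^ Q / C) ≤ μ (ball p r) ∧ μ (ball p r) ≤ ENNReal.ofReal (C * r ^ Q)

def IsoperimetricAt (μ : Measure M) (Per : Set M → Measure M) (Q C R : ℝ) (F : Set M) (p : M) :
    Prop :=
  ∀ r ∈ Ioo (0 : ℝ) R,
    (min (μ (F ∩ ball p r)) (μ (ball p r \ F))) ^ ((Q - 1) / Q) ≤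
      ENNReal.ofReal C * Per F (ball p r)

variable {μ : Measure M} {Per : Set M → Measure M} {F : Set M} {Q C C' R R' : ℝ} {p : M}

lemma AhlforsRegularAt.mono (h : AhlforsRegularAt μ Q C R p) (hC : 0 < C) (hCC' : C ≤ C')
    (hR'R : R' ≤ R) : AhlforsRegularAt μ Q C' R' p := by
  intro r hr
  have hrQ : 0 ≤ r ^ Q := Real.rpow_nonneg hr.1.le Q
  obtain ⟨hlow, hup⟩ := h r ⟨hr.1, hr.2.trans_le hR'R⟩
  exact ⟨(ENNReal.ofReal_le_ofReal (div_le_div_of_nonneg_left hrQ hC hCC')).trans hlow,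
    hup.trans (ENNReal.ofReal_le_ofReal (mul_le_mul_of_nonneg_right hCC' hrQ))⟩

lemma IsoperimetricAt.mono (h : IsoperimetricAt μ Per Q C R F p) (hCC' : C ≤ C') (hR'R : R' ≤ R) :
    IsoperimetricAt μ Per Q C' R' F p := fun r hr =>
  (h r ⟨hr.1, hr.2.trans_le hR'R⟩).trans (by gcongr)

lemma AhlforsRegularAt.measure_ball_two_mul_le (h : AhlforsRegularAt μ Q C R p) (hC : 0 < C)
    {r : ℝ} (hr : 0 < r) (hrR : 2 * r < R) :
    μ (ball p (2 * r)) ≤ ENNReal.ofReal (C ^ 2 * 2 ^ Q) * μ (ball p r) := by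
  have hrR' : r < R := by linarith
  calc μ (ball p (2 * r)) ≤ ENNReal.ofReal (C * (2 * r) ^ Q) := (h _ ⟨by positivity, hrR⟩).2
    _ = ENNReal.ofReal (C ^ 2 * 2 ^ Q) * ENNReal.ofReal (r ^ Q / C) := by
      rw [← ENNReal.ofReal_mul (by positivity), Real.mul_rpow zero_le_two hr.le]
      congr 1
      field_simp
    _ ≤ ENNReal.ofReal (C ^ 2 * 2 ^ Q) * μ (ball p r) := by gcongr; exact (h r ⟨hr, hrR'⟩).1

lemma IsoperimetricAt.rpow_le_mul_perimeter (hI : IsoperimetricAt μ Per Q C R F p)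
    (hA : AhlforsRegularAt μ Q C R p) (hQ : 1 ≤ Q)
    (hC : 0 < C) {β ρ : ℝ} (hβ : 0 < β) (hρ : ρ ∈ Ioo 0 R)
    (hmin : ENNReal.ofReal β * μ (ball p ρ) ≤ min (μ (F ∩ ball p ρ)) (μ (ball p ρ \ F))) :
    ENNReal.ofReal (ρ ^ (Q - 1)) ≤
      ENNReal.ofReal (C / (β / C) ^ ((Q - 1) / Q)) * Per F (ball p ρ) := by
  have hρ₀ := hρ.1
  set θ := (Q - 1) / Q with hθ_def
  have hθ : 0 ≤ θ := div_nonneg (by linarith) (by linarith)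
  set c := (β / C) ^ θ
  have hc : 0 < c := by positivity
  have hvol : ENNReal.ofReal (β / C * ρ ^ Q) ≤ min (μ (F ∩ ball p ρ)) (μ (ball p ρ \ F)) := by
    calc ENNReal.ofReal (β / C * ρ ^ Q) = ENNReal.ofReal β * ENNReal.ofReal (ρ ^ Q / C) := by
          rw [← ENNReal.ofReal_mul hβ.le]; ring_nf
      _ ≤ ENNReal.ofReal β * μ (ball p ρ) := by gcongr; exact (hA ρ hρ).1
      _ ≤ _ := hmin
  have hpow : ENNReal.ofReal (c * ρ ^ (Q - 1)) ≤ min (μ (F ∩ ball p ρ)) (μ (ball p ρ \ F)) ^ θ := by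
    have hρQ : (β / C * ρ ^ Q) ^ θ = c * ρ ^ (Q - 1) := by
      rw [Real.mul_rpow (by positivity) (by positivity), ← Real.rpow_mul hρ.1.le]
      congr 2
      rw [hθ_def]
      field_simp
    rw [← hρQ, ← ENNReal.ofReal_rpow_of_pos (by positivity)]
    exact ENNReal.rpow_le_rpow hvol hθ
  calc ENNReal.ofReal (ρ ^ (Q - 1)) = ENNReal.ofReal c⁻¹ * ENNReal.ofReal (c * ρ ^ (Q - 1)) := by
        rw [← ENNReal.ofReal_mul (by positivity), inv_mul_cancel_left₀ hc.ne']
    _ ≤ ENNReal.ofReal c⁻¹ * (ENNReal.ofReal C * Per F (ball p ρ)) := by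
        gcongr; exact hpow.trans (hI ρ hρ)
    _ = ENNReal.ofReal (C / c) * Per F (ball p ρ) := by
        rw [← mul_assoc, ← ENNReal.ofReal_mul (by positivity), inv_mul_eq_div]

lemma exists_radius_measure_inter_ball_between {r₀ : ℝ} {a β D : ℝ≥0∞} (hr₀ : 0 < r₀)
    (hD : ∀ r, 0 < r → 2 * r ≤ r₀ → μ (ball p (2 * r)) ≤ D * μ (ball p r))
    (hβD : β * D ≤ a)
    (hdens : a < limsup (fun r => μ (F ∩ ball p r) / μ (ball p r)) (𝓝[>] 0))
    (hsmall : μ (F ∩ ball p r₀) < β * μ (ball p r₀)) :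
    ∃ ρ ∈ Ioo 0 r₀,
      β * μ (ball p ρ) ≤ μ (F ∩ ball p ρ) ∧ μ (F ∩ ball p ρ) ≤ a * μ (ball p ρ) := by
  set r : ℕ → ℝ := fun k => r₀ * (1 / 2) ^ k with hr
  have hr_pos (k : ℕ) : 0 < r k := by positivity
  have hr_succ (k : ℕ) : 2 * r (k + 1) = r k := by simp only [hr, pow_succ]; ring
  have hr_le (k : ℕ) : r k ≤ r₀ :=
    mul_le_of_le_one_right hr₀.le (pow_le_one₀ (by norm_num) (by norm_num))
  have hD_succ (k : ℕ) : β * μ (ball p (r k)) ≤ a * μ (ball p (r (k + 1))) := by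
    calc β * μ (ball p (r k)) ≤ β * (D * μ (ball p (r (k + 1)))) := by
          rw [← hr_succ]; gcongr; exact hD _ (hr_pos _) ((hr_succ k).trans_le (hr_le k))
      _ ≤ a * μ (ball p (r (k + 1))) := by rw [← mul_assoc]; gcongr
  have hex : ∃ k, β * μ (ball p (r k)) ≤ μ (F ∩ ball p (r k)) := by
    obtain ⟨s, hs, hs_mem⟩ := ((frequently_lt_of_lt_limsup (by isBoundedDefault)
      hdens).and_eventually (Ioo_mem_nhdsGT hr₀)).exists
    obtain ⟨k, hk_lt, hk_le⟩ := exists_nat_pow_near_of_lt_one (div_pos hs_mem.1 hr₀)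
      ((div_le_one hr₀).2 hs_mem.2.le) (by norm_num : (0 : ℝ) < 1 / 2) (by norm_num)
    have hs_lt : r (k + 1) < s := by rw [lt_div_iff₀ hr₀] at hk_lt; simp only [hr]; linarith
    have hs_le : s ≤ r k := by rw [div_le_iff₀ hr₀] at hk_le; simp only [hr]; linarith
    refine ⟨k, ?_⟩
    calc β * μ (ball p (r k)) ≤ a * μ (ball p (r (k + 1))) := hD_succ k
      _ ≤ a * μ (ball p s) := by gcongr
      _ ≤ μ (F ∩ ball p s) := (ENNReal.mul_lt_of_lt_div hs).le
      _ ≤ μ (F ∩ ball p (r k)) := by gcongr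
  classical
  have hfind_ne : Nat.find hex ≠ 0 := by
    intro h0
    have := Nat.find_spec hex
    rw [h0] at this
    simp only [hr, pow_zero, mul_one] at this
    exact (this.trans_lt hsmall).false
  obtain ⟨j, hj⟩ := Nat.exists_eq_add_one_of_ne_zero hfind_ne
  have hj_bad : ¬ β * μ (ball p (r j)) ≤ μ (F ∩ ball p (r j)) := Nat.find_min hex (by omega)
  refine ⟨r (j + 1), ⟨hr_pos _, ?_⟩, hj ▸ Nat.find_spec hex, ?_⟩
  · linarith [hr_succ j, hr_pos (j + 1), hr_le j]
  calc μ (F ∩ ball p (r (j + 1))) ≤ μ (F ∩ ball p (r j)) := by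
        gcongr; linarith [hr_succ j, hr_pos (j + 1)]
    _ ≤ β * μ (ball p (r j)) := (not_le.1 hj_bad).le
    _ ≤ a * μ (ball p (r (j + 1))) := hD_succ j

lemma exists_const_rpow_le_perimeter (hQ : 1 < Q) (hC : 1 ≤ C) {α : ℝ} (hα : α ∈ Ioo 0 1) :
    ∃ β > (0 : ℝ), ∃ K : ℝ, ∀ {p : M} {F : Set M} {r₀ : ℝ},
      AhlforsRegularAt μ Q C R p → IsoperimetricAt μ Per Q C R F p →
      ENNReal.ofReal α ≤ limsup (fun r => μ (F ∩ ball p r) / μ (ball p r)) (𝓝[>] 0) →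
      r₀ ∈ Ioo 0 R → μ F < ENNReal.ofReal (β * r₀ ^ Q) →
      ∃ ρ ∈ Ioc 0 r₀, ENNReal.ofReal (ρ ^ (Q - 1)) ≤ ENNReal.ofReal K * Per F (ball p ρ) := by
  obtain ⟨hα₀, hα₁⟩ := hα
  set D := C ^ 2 * 2 ^ Q
  have hD : 1 ≤ D := one_le_mul_of_one_le_of_one_le (one_le_pow₀ hC)
    (Real.one_le_rpow one_le_two (by linarith))
  set β := α / (2 * D)
  have hβ : 0 < β := by positivity
  have hβD : β * D = α / 2 := by simp only [β]; field_simp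
  have hβα : β ≤ α / 2 := div_le_div_of_nonneg_left hα₀.le two_pos (by linarith)
  refine ⟨β / C, by positivity, C / (β / C) ^ ((Q - 1) / Q),
    fun {p F r₀} hA hI hdens hr₀ hF => ?_⟩
  have hsmall : μ (F ∩ ball p r₀) < ENNReal.ofReal β * μ (ball p r₀) :=
    calc μ (F ∩ ball p r₀) ≤ μ F := measure_mono inter_subset_left
      _ < ENNReal.ofReal (β / C * r₀ ^ Q) := hF
      _ = ENNReal.ofReal β * ENNReal.ofReal (r₀ ^ Q / C) := by
        rw [← ENNReal.ofReal_mul hβ.le]; ring_nf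
      _ ≤ ENNReal.ofReal β * μ (ball p r₀) := by gcongr; exact (hA r₀ hr₀).1
  obtain ⟨ρ, hρ, hlow, hup⟩ := exists_radius_measure_inter_ball_between hr₀.1
    (fun r hr h2r => hA.measure_ball_two_mul_le (by linarith) hr (by linarith [hr₀.2]))
    (by rw [← ENNReal.ofReal_mul hβ.le, hβD])
    ((ENNReal.ofReal_lt_ofReal_iff hα₀).2 (by linarith) |>.trans_le hdens) hsmall
  have hρR : ρ ∈ Ioo 0 R := ⟨hρ.1, hρ.2.trans hr₀.2⟩
  have hmin := mul_le_min_measure_inter_sdiff hlow hup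
    (by rw [← ENNReal.ofReal_add hβ.le (by positivity), ← ENNReal.ofReal_one]
        exact ENNReal.ofReal_le_ofReal (by linarith))
    (ne_top_of_le_ne_top ENNReal.ofReal_ne_top (hA ρ hρR).2)
  exact ⟨ρ, ⟨hρ.1, hρ.2.le⟩, hI.rpow_le_mul_perimeter hA hQ.le (by linarith) hβ hρR hmin⟩

end Balls

theorem hausdorffMeasure_eq_zero_of_uniformly_regular {M : Type*} [MetricSpace M]
    [MeasurableSpace M] [BorelSpace M] [TopologicalSpace.SeparableSpace M]
    (μ : Measure M) (Per : Set M → Measure M) {Q C R α : ℝ} (hQ : 1 < Q) (hC : 1 ≤ C)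
    (hR : 0 < R) (hα : α ∈ Ioo 0 1) {Ω : Set M} {E : ℕ → Set M}
    (hE0 : Tendsto (fun h => μ (E h)) atTop (𝓝 0))
    (hP0 : Tendsto (fun h => Per (E h) Ω) atTop (𝓝 0)) {S : Set M}
    (hS : ∀ p ∈ S, ball p R ⊆ Ω ∧ AhlforsRegularAt μ Q C R p ∧
      (∀ h, IsoperimetricAt μ Per Q C R (E h) p) ∧
      ∀ h, ENNReal.ofReal α ≤ limsup (fun r => μ (E h ∩ ball p r) / μ (ball p r)) (𝓝[>] 0)) :
    μH[Q - 1] S = 0 := by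
  obtain ⟨β, hβ, K, hK⟩ := exists_const_rpow_le_perimeter (μ := μ) (Per := Per) (R := R) hQ hC hα
  refine hausdorffMeasure_eq_zero_of_forall_cover fun ε hε => ?_
  set r₀ := min (ε / 8) (R / 2)
  have hr₀ : r₀ ∈ Ioo 0 R := ⟨lt_min (by positivity) (by positivity),
    (min_le_right _ _).trans_lt (by linarith)⟩
  have hr₀ε : 8 * r₀ ≤ ε := by linarith [min_le_left (ε / 8) (R / 2)]
  set L := ENNReal.ofReal (8 ^ (Q - 1)) * ENNReal.ofReal K
  have hL : L ≠ ∞ := ENNReal.mul_ne_top ENNReal.ofReal_ne_top ENNReal.ofReal_ne_top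
  obtain ⟨h, hEh, hPh⟩ := ((hE0.eventually_lt_const
    (ENNReal.ofReal_pos.2 (by have := hr₀.1; positivity : 0 < β * r₀ ^ Q))).and
    (hP0.eventually_lt_const (ENNReal.div_pos (ENNReal.ofReal_pos.2 hε).ne' hL))).exists
  choose! ρ hρ hρK using fun p hp =>
    hK (hS p hp).2.1 ((hS p hp).2.2.1 h) ((hS p hp).2.2.2 h) hr₀ hEh
  obtain ⟨c, hcS, hc, hcov, hdiam, hsum⟩ :=
    exists_countable_cover_tsum_ediam_rpow_le (Per (E h)) (by linarith) hρ hρK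
  refine ⟨c, fun x => closedBall x (4 * ρ x), hc, hcov,
    fun x hx => (hdiam x hx).trans (ENNReal.ofReal_le_ofReal hr₀ε), hsum.trans ?_⟩
  calc L * Per (E h) (⋃ x ∈ c, ball x (ρ x)) ≤ L * Per (E h) Ω := by
        gcongr
        exact iUnion₂_subset fun x hx =>
          (ball_subset_ball ((hρ x (hcS hx)).2.trans hr₀.2.le)).trans (hS x (hcS hx)).1
    _ ≤ ENNReal.ofReal ε := by rw [mul_comm]; exact (ENNReal.mul_lt_of_lt_div hPh).le

theorem stmt_13_general {M : Type*} [MetricSpace M] [MeasurableSpace M] [BorelSpace M]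
    [TopologicalSpace.SeparableSpace M]
    (μ : Measure M)
    (Q : ℝ) (hQ : 1 < Q)
    -- the perimeter measure E ↦ P(E,·)
    (Per : Set M → Measure M)
    (Ω : Set M) (hΩ : IsOpen Ω)
    (hreg : ∀ K : Set M, IsCompact K → ∃ C > (0:ℝ), ∃ R > (0:ℝ), ∀ p ∈ K,
      ∀ r ∈ Set.Ioo (0:ℝ) R,
        ENNReal.ofReal (r ^ Q / C) ≤ μ (ball p r) ∧
        μ (ball p r) ≤ ENNReal.ofReal (C * r ^ Q))
    (hiso : ∀ K : Set M, IsCompact K → ∃ C > (0:ℝ), ∃ R > (0:ℝ),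
      ∀ (E : Set M), MeasurableSet E → ∀ p ∈ K, ∀ r ∈ Set.Ioo (0:ℝ) R,
        (min (μ (E ∩ ball p r)) (μ (ball p r \ E))) ^ ((Q - 1) / Q)
          ≤ ENNReal.ofReal C * Per E (ball p r))
    (E : ℕ → Set M) (hEm : ∀ h, MeasurableSet (E h))
    (hE0 : Tendsto (fun h => μ (E h)) atTop (𝓝 0))
    (hP0 : Tendsto (fun h => Per (E h) Ω) atTop (𝓝 0))
    (α : ℝ) (hα : α ∈ Set.Ioo (0:ℝ) 1) :
    μH[Q - 1] (⋂ h : ℕ, {p : M | p ∈ Ω ∧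
      ENNReal.ofReal α ≤
        Filter.limsup (fun r : ℝ => μ (E h ∩ ball p r) / μ (ball p r)) (𝓝[>] 0)})
      = 0 := by
  set D := ⋂ h : ℕ, {p : M | p ∈ Ω ∧
    ENNReal.ofReal α ≤ limsup (fun r : ℝ => μ (E h ∩ ball p r) / μ (ball p r)) (𝓝[>] 0)}
  have hD : D ⊆ ⋃ k : ℕ, {p ∈ D | ball p (1 / (k + 1)) ⊆ Ω ∧
      AhlforsRegularAt μ Q (k + 1) (1 / (k + 1)) p ∧
      ∀ h, IsoperimetricAt μ Per Q (k + 1) (1 / (k + 1)) (E h) p} := by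
    intro p hp
    obtain ⟨ε, hε, hball⟩ := isOpen_iff.1 hΩ p (mem_iInter.1 hp 0).1
    obtain ⟨C₁, hC₁, R₁, hR₁, hA⟩ := hreg {p} isCompact_singleton
    obtain ⟨C₂, hC₂, R₂, hR₂, hI⟩ := hiso {p} isCompact_singleton
    have hΩ_ev := eventually_nat_of_exists_pos (P := fun _ R => ball p R ⊆ Ω)
      (fun h _ _ hR => (ball_subset_ball hR).trans h) ⟨1, one_pos, ε, hε, hball⟩
    have hA_ev := eventually_nat_of_exists_pos (P := fun C R => AhlforsRegularAt μ Q C R p)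
      (fun h hC hCC hRR => h.mono hC hCC hRR) ⟨C₁, hC₁, R₁, hR₁, hA p rfl⟩
    have hI_ev := eventually_nat_of_exists_pos
      (P := fun C R => ∀ h, IsoperimetricAt μ Per Q C R (E h) p)
      (fun h _ hCC hRR k => (h k).mono hCC hRR) ⟨C₂, hC₂, R₂, hR₂, fun k => hI _ (hEm k) p rfl⟩
    obtain ⟨k, hk⟩ := (hΩ_ev.and (hA_ev.and hI_ev)).exists
    exact mem_iUnion.2 ⟨k, hp, hk⟩
  refine measure_mono_null hD (measure_iUnion_null fun k => ?_)
  exact hausdorffMeasure_eq_zero_of_uniformly_regular μ Per hQ (by simp) (by positivity) hα hE0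
    hP0 fun p hp => ⟨hp.2.1, hp.2.2.1, hp.2.2.2, fun h => (mem_iInter.1 hp.1 h).2⟩

/-- **Sets with vanishing volume and perimeter have ℋ^{Q−1}-negligible common
high-density points.**
In an (equiregular CC) metric measure space (M,d,μ) of homogeneous dimension Q,
with local Ahlfors Q-regularity, the relative isoperimetric inequality
min{μ(E∩B(p,r)), μ(B(p,r)\E)}^{(Q−1)/Q} ≤ C·P(E, B(p,r)) (where P(E,·) is the
perimeter measure of E), and spheres of μ-measure zero (valid since the space is
geodesic): if (E_h) are measurable subsets of the open set Ω with μ(E_h) → 0 and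
P(E_h; Ω) → 0, then for every α ∈ (0,1) the set of points where all the E_h have
upper density ≥ α is ℋ^{Q−1}-null. -/
theorem stmt_13 {M : Type*} [MetricSpace M] [MeasurableSpace M] [BorelSpace M]
    [TopologicalSpace.SeparableSpace M]
    (μ : Measure M) [IsLocallyFiniteMeasure μ]
    (Q : ℝ) (hQ : 1 < Q)
    -- the perimeter measure E ↦ P(E,·)
    (Per : Set M → Measure M)
    (Ω : Set M) (hΩ : IsOpen Ω)
    (hreg : ∀ K : Set M, IsCompact K → ∃ C > (0:ℝ), ∃ R > (0:ℝ), ∀ p ∈ K,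
      ∀ r ∈ Set.Ioo (0:ℝ) R,
        ENNReal.ofReal (r ^ Q / C) ≤ μ (ball p r) ∧
        μ (ball p r) ≤ ENNReal.ofReal (C * r ^ Q))
    (hiso : ∀ K : Set M, IsCompact K → ∃ C > (0:ℝ), ∃ R > (0:ℝ),
      ∀ (E : Set M), MeasurableSet E → ∀ p ∈ K, ∀ r ∈ Set.Ioo (0:ℝ) R,
        (min (μ (E ∩ ball p r)) (μ (ball p r \ E))) ^ ((Q - 1) / Q)
          ≤ ENNReal.ofReal C * Per E (ball p r))
    (hsphere : ∀ (p : M) (r : ℝ), μ (sphere p r) = 0)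
    (E : ℕ → Set M) (hEm : ∀ h, MeasurableSet (E h)) (hEΩ : ∀ h, E h ⊆ Ω)
    (hE0 : Tendsto (fun h => μ (E h)) atTop (𝓝 0))
    (hP0 : Tendsto (fun h => Per (E h) Ω) atTop (𝓝 0))
    (α : ℝ) (hα : α ∈ Set.Ioo (0:ℝ) 1) :
    μH[Q - 1] (⋂ h : ℕ, {p : M | p ∈ Ω ∧
      ENNReal.ofReal α ≤
        Filter.limsup (fun r : ℝ => μ (E h ∩ ball p r) / μ (ball p r)) (𝓝[>] 0)})
      = 0 :=
  stmt_13_general μ Q hQ Per Ω hΩ hreg hiso E hEm hE0 hP0 α hα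
end
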